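/- arXiv:1703.05882 — 3 statements merged into one kernel-verified Lean document; each statement's English description precedes it below -/
import Mathlib

section
/- Let g, x, y be real numbers with g ≥ 4, x ≥ 1, y ≥ 1 and x + 2y ≤ g. Then x² + (g−x)(2y+1)/2 ≤ (g−2)² + 3. -/
/-- Optimization in Step 2 of the proof of Theorem 1.1(2): on the domain
`{(x, y) : x ≥ 1, y ≥ 1, x + 2y ≤ g}` with `g ≥ 4`, the function
`f(x, y) = x² + (g - x)(2y + 1)/2` is bounded above by `(g - 2)² + 3`. -/
theorem stmt4 (g x y : ℝ) (hg : 4 ≤ g) (hx : 1 ≤ x) (hy : 1 ≤ y) (hxy : x + 2 * y ≤ g) :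
    x ^ 2 + (g - x) * (2 * y + 1) / 2 ≤ (g - 2) ^ 2 + 3 := by
  nlinarith [mul_nonneg (sub_nonneg.2 hx) (sub_nonneg.2 hy), sq_nonneg (x - 1), sq_nonneg (y - 1), mul_nonneg (sub_nonneg.2 hy) (sub_nonneg.2 hxy), sq_nonneg (g - x - 2*y), mul_nonneg (sub_nonneg.2 hx) (sub_nonneg.2 hxy), mul_nonneg (sub_nonneg.2 hy) (sub_nonneg.2 hxy), sq_nonneg (x + 2*y - g), mul_nonneg (mul_nonneg (sub_nonneg.2 hx) (sub_nonneg.2 hy)) (sub_nonneg.2 hxy)]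
end

section
/- Let g, ℓ, n, p, q be integers with 1 ≤ n ≤ ℓ and 1 ≤ p ≤ n². If (g−(ℓ+1))² + (ℓ+1)² < p + q < (g−ℓ)² + 1, then ((g−n)−(ℓ−n+1))² + (ℓ−n+1)² < q < ((g−n)−(ℓ−n))² + 1. -/
/-- Arithmetic induction step in the proof of Theorem 6.4: if `1 ≤ n ≤ ℓ`,
`1 ≤ p ≤ n²` and `(g-(ℓ+1))² + (ℓ+1)² < p + q < (g-ℓ)² + 1`, then
`((g-n)-(ℓ-n+1))² + (ℓ-n+1)² < q < ((g-n)-(ℓ-n))² + 1`. -/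
theorem stmt8 (g ℓ n p q : ℤ) (hn : 1 ≤ n) (hnl : n ≤ ℓ) (hp1 : 1 ≤ p) (hpn : p ≤ n ^ 2)
    (h1 : (g - (ℓ + 1)) ^ 2 + (ℓ + 1) ^ 2 < p + q) (h2 : p + q < (g - ℓ) ^ 2 + 1) :
    ((g - n) - (ℓ - n + 1)) ^ 2 + (ℓ - n + 1) ^ 2 < q ∧
      q < ((g - n) - (ℓ - n)) ^ 2 + 1 := by
  constructor
  · nlinarith [mul_nonneg (sub_nonneg.2 hnl) (by linarith : (0:ℤ) ≤ n + 1)]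
  · nlinarith
end

section
/- Let g and n be natural numbers with g ≥ 8, n ≥ 1, and n < g² + 8g + 1 − 4√2·g^{3/2} (as real numbers). Then there exist natural numbers n₁, n₂, n₃, n₄, n₅ such that n − 1 = n₁² + n₂² + n₃² + n₄² + n₅² and n₁ + n₂ + n₃ + n₄ + n₅ ≤ g − 1. -/
set_option maxHeartbeats 1000000 in

/-- Key construction in the proof of Theorem 1.2 (asymptotic completeness): for natural
numbers `g ≥ 8` and `n ≥ 1` with `n < g² + 8g + 1 - 4√2·g^{3/2}` (as real numbers),
`n - 1` can be written as a sum of five squares whose bases sum to at most `g - 1`. -/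
theorem stmt10 (g n : ℕ) (hg : 8 ≤ g) (hn : 1 ≤ n)
    (h : (n : ℝ) < (g : ℝ) ^ 2 + 8 * g + 1 - 4 * Real.sqrt 2 * (g : ℝ) ^ ((3 : ℝ) / 2)) :
    ∃ n₁ n₂ n₃ n₄ n₅ : ℕ,
      n - 1 = n₁ ^ 2 + n₂ ^ 2 + n₃ ^ 2 + n₄ ^ 2 + n₅ ^ 2 ∧
      n₁ + n₂ + n₃ + n₄ + n₅ ≤ g - 1 := by
  obtain ⟨x, hx⟩ : ∃ x, x = Nat.sqrt (n - 1) := ⟨_, rfl⟩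
  have hx2 : x ^ 2 ≤ n - 1 := by rw [hx]; exact Nat.sqrt_le' _
  have hx2' : n - 1 < (x + 1) ^ 2 := by rw [hx]; exact Nat.lt_succ_sqrt' _
  have hexp : (x + 1) ^ 2 = x ^ 2 + 2 * x + 1 := by ring
  obtain ⟨a, b, c, d, habcd⟩ := Nat.sum_four_squares (n - 1 - x ^ 2)
  have hm2 : n - 1 - x ^ 2 ≤ 2 * x := by omega
  refine ⟨x, a, b, c, d, by omega, ?_⟩
  -- Cauchy-Schwarz: (a+b+c+d)^2 ≤ 4(a²+b²+c²+d²) ≤ 8x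
  have hcs : (a + b + c + d) ^ 2 ≤ 8 * x := by
    have h4 : a ^ 2 + b ^ 2 + c ^ 2 + d ^ 2 ≤ 2 * x := by omega
    nlinarith [sq_nonneg (a - b : ℤ), sq_nonneg (a - c : ℤ), sq_nonneg (a - d : ℤ),
      sq_nonneg (b - c : ℤ), sq_nonneg (b - d : ℤ), sq_nonneg (c - d : ℤ),
      (by exact_mod_cast h4 : (a:ℤ)^2 + b^2 + c^2 + d^2 ≤ 2 * x)]
  -- pass to the reals
  obtain ⟨w, hw⟩ : ∃ w, w = Real.sqrt (2 * g) := ⟨_, rfl⟩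
  have hgpos : (0:ℝ) < g := by positivity
  have hg8 : (8:ℝ) ≤ g := by exact_mod_cast hg
  have hw0 : 0 ≤ w := hw ▸ Real.sqrt_nonneg _
  have hw2 : w ^ 2 = 2 * g := hw ▸ Real.sq_sqrt (by positivity)
  have hw4 : 4 ≤ w := by
    nlinarith [hw2, hw0]
  have hw3 : w ^ 3 = 2 * g * w := by linear_combination w * hw2
  have hpow : 4 * Real.sqrt 2 * (g : ℝ) ^ ((3 : ℝ) / 2) = 2 * w ^ 3 := by
    have h1 : (g : ℝ) ^ ((3 : ℝ) / 2) = g * Real.sqrt g := by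
      rw [show (3:ℝ)/2 = 1 + 1/2 by norm_num, Real.rpow_add hgpos, Real.rpow_one,
        ← Real.sqrt_eq_rpow]
    have h2 : w = Real.sqrt 2 * Real.sqrt g := by
      rw [hw, Real.sqrt_mul (by norm_num)]
    have h3 : Real.sqrt 2 ^ 2 = 2 := Real.sq_sqrt (by norm_num)
    have hsg : Real.sqrt g ^ 2 = g := Real.sq_sqrt hgpos.le
    rw [h1, h2]
    linear_combination (-2*Real.sqrt 2*Real.sqrt g^3) * h3 + (-4*Real.sqrt 2*Real.sqrt g) * hsg
  have hxr : (x:ℝ) ^ 2 < (g : ℝ) ^ 2 + 8 * g - 4 * g * w := by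
    have hx1 : (x:ℝ)^2 ≤ (n:ℝ) - 1 := by
      have hh : (x ^ 2 + 1 : ℕ) ≤ n := by omega
      have h3 := (Nat.cast_le (α := ℝ)).2 hh
      push_cast at h3; linarith
    linarith [hpow, h, hw3, hx1]
  -- 2x ≤ 2g - 4w
  have hPnn : (0:ℝ) ≤ 2 * g - 4 * w := by nlinarith [hw2, hw4, hw0]
  have key1 : 2 * (x:ℝ) ≤ 2 * g - 4 * w := by
    have hsq : (2*(x:ℝ))^2 ≤ (2 * g - 4 * w)^2 := by nlinarith [hw2, hxr]
    exact (pow_le_pow_iff_left₀ (by positivity) hPnn (by norm_num)).1 hsq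
  have hs : ((a + b + c + d : ℕ) : ℝ) ≤ 2 * w - 4 := by
    have h1 : ((a+b+c+d:ℕ):ℝ)^2 ≤ 8 * (x:ℝ) := by exact_mod_cast hcs
    have hsq : ((a+b+c+d:ℕ):ℝ)^2 ≤ (2*w - 4)^2 := by nlinarith [hw2, key1]
    exact (pow_le_pow_iff_left₀ (by positivity) (by linarith) (by norm_num)).1 hsq
  have total : ((x + a + b + c + d + 4 : ℕ) : ℝ) ≤ (g:ℝ) := by
    push_cast
    push_cast at hs
    linarith
  have : x + a + b + c + d + 4 ≤ g := by exact_mod_cast total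
  omega
end
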